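/- arXiv:2507.00581 — 5 statements merged into one kernel-verified Lean document; each statement's English description precedes it below -/
import Mathlib

section
/- Let μ be a compactly supported Borel probability measure on ℝ^d with a tight-frame spectrum Λ (with some constant A > 0). Let U ⊆ ℝ^d be an open set and suppose there is a function g : ℝ^d → ℝ which is infinitely differentiable on U with g(x) > 0 for all x ∈ U, such that (μ*μ̃)(E) = ∫_E g(x) dx for every Borel set E ⊆ U. Then for every Schwartz function φ : ℝ^d → ℂ whose support is a compact subset of U not containing 0, we have ∑_{λ∈Λ} φ̂(λ) = 0. -/
open MeasureTheory Metric Set ENNReal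

noncomputable section

/-- Euclidean space ℝ^d. -/
abbrev Euc (d : ℕ) := EuclideanSpace ℝ (Fin d)

/-- The exponential `e^{-2πi l·x}`. -/
noncomputable def fexp {d : ℕ} (l x : Euc d) : ℂ :=
  Complex.exp (-(2 * (Real.pi : ℂ) * Complex.I * ((inner ℝ l x : ℝ) : ℂ)))

/-- `Λ` is a tight-frame spectrum for `μ` with constant `A > 0`:
for every `f ∈ L²(μ)`, `∑_{λ∈Λ} |∫ f(x) e^{-2πi λ·x} dμ(x)|² = A ∫ |f|² dμ`. -/
def IsTightFrameSpectrum {d : ℕ} (μ : Measure (Euc d)) (Λ : Set (Euc d)) (A : ℝ) : Prop :=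
  Λ.Countable ∧ 0 < A ∧
    ∀ f : Euc d → ℂ, MemLp f 2 μ →
      ∑' l : Λ, ‖∫ x, f x * fexp (l : Euc d) x ∂μ‖ ^ 2 = A * ∫ x, ‖f x‖ ^ 2 ∂μ

/-- `μ` is tight-frame spectral: it admits a tight-frame spectrum with some constant `A > 0`. -/
def TightFrameSpectral {d : ℕ} (μ : Measure (Euc d)) : Prop :=
  ∃ Λ A, IsTightFrameSpectrum μ Λ A

/-- The segment measure `μ_{x₀,v}`: pushforward of Lebesgue measure on `[0,1]`
under `t ↦ x₀ + t • v`. -/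
noncomputable def segMeasure (x0 v : Euc 2) : Measure (Euc 2) :=
  Measure.map (fun t : ℝ => x0 + t • v) (volume.restrict (Set.Icc (0:ℝ) 1))

/-- `μ̃`: the pushforward of `μ` under `x ↦ -x`. -/
noncomputable def mneg {d : ℕ} (μ : Measure (Euc d)) : Measure (Euc d) :=
  Measure.map (fun x => -x) μ

/-- The convolution `μ * ν`: pushforward of `μ × ν` under `(x,y) ↦ x + y`. -/
noncomputable def mconv {d : ℕ} (μ ν : Measure (Euc d)) : Measure (Euc d) :=
  Measure.map (fun p : Euc d × Euc d => p.1 + p.2) (μ.prod ν)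

/-- The Fourier transform `f̂(ξ) = ∫ f(x) e^{-2πi ξ·x} dx`. -/
noncomputable def ftFun {d : ℕ} (f : Euc d → ℂ) (ξ : Euc d) : ℂ :=
  ∫ x, f x * fexp ξ x

/-!
On the support of `φ` write `φ = g ψ` with `ψ = φ / g`, a smooth compactly supported
function; since `μ * μ̃` has density `g` there, `φ̂(λ) = ∫ ψ(z) e^{-2πi λ·z} d(μ * μ̃)(z)`.
Expanding `ψ` by Fourier inversion and integrating against `μ × μ̃` turns this into
`∫ ψ̂(t) |μ̂(λ - t)|² dt`. The tight-frame identity for the exponential `e^{2πi t·x}` gives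
`∑_{λ ∈ Λ} |μ̂(λ - t)|² = A` for every `t`, so `∑_{λ ∈ Λ} φ̂(λ) = A ∫ ψ̂ = A ψ(0) = 0`.
-/

open FourierTransform ComplexConjugate SchwartzMap

section Fourier

variable {d : ℕ}

lemma continuous_fexp (l : Euc d) : Continuous (fexp l) := by
  unfold fexp; fun_prop

lemma continuous_fexp_left (x : Euc d) : Continuous fun l => fexp l x := by
  unfold fexp; fun_prop

lemma norm_fexp (l x : Euc d) : ‖fexp l x‖ = 1 := by
  simp [fexp, Complex.norm_exp]

lemma fexp_add_left (a b x : Euc d) : fexp (a + b) x = fexp a x * fexp b x := by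
  simp only [fexp, ← Complex.exp_add, inner_add_left]; push_cast; ring_nf

lemma fexp_add_right (l x y : Euc d) : fexp l (x + y) = fexp l x * fexp l y := by
  simp only [fexp, ← Complex.exp_add, inner_add_right]; push_cast; ring_nf

lemma fexp_neg_right (l x : Euc d) : fexp l (-x) = conj (fexp l x) := by
  simp only [fexp, ← Complex.exp_conj, inner_neg_right, map_neg, map_mul, Complex.conj_ofReal,
    Complex.conj_I, map_ofNat]
  push_cast; ring_nf

lemma fexp_zero_right (l : Euc d) : fexp l 0 = 1 := by
  simp [fexp]

lemma fourierInv_eq_integral_fexp (F : Euc d → ℂ) (z : Euc d) :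
    𝓕⁻ F z = ∫ t, fexp (-t) z * F t := by
  simp only [Real.fourierInv_eq', fexp, smul_eq_mul, inner_neg_left]
  congr 1 with t
  push_cast; ring_nf

def fourierStieltjes (μ : Measure (Euc d)) (ξ : Euc d) : ℂ :=
  ∫ x, fexp ξ x ∂μ

lemma continuous_fourierStieltjes (μ : Measure (Euc d)) [IsFiniteMeasure μ] :
    Continuous (fourierStieltjes μ) :=
  continuous_of_dominated (bound := fun _ => 1)
    (fun ξ => (continuous_fexp ξ).aestronglyMeasurable)
    (fun ξ => .of_forall fun x => (norm_fexp ξ x).le) (integrable_const 1)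
    (.of_forall fun x => continuous_fexp_left x)

lemma fourierStieltjes_mneg (μ : Measure (Euc d)) (ξ : Euc d) :
    fourierStieltjes (mneg μ) ξ = conj (fourierStieltjes μ ξ) := by
  rw [fourierStieltjes, mneg, integral_map measurable_neg.aemeasurable
    (continuous_fexp ξ).aestronglyMeasurable]
  simp only [fexp_neg_right, integral_conj, fourierStieltjes]

lemma fourierStieltjes_mul_fourierStieltjes_mneg (μ : Measure (Euc d)) (ξ : Euc d) :
    fourierStieltjes μ ξ * fourierStieltjes (mneg μ) ξ = (‖fourierStieltjes μ ξ‖ ^ 2 : ℝ) := by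
  rw [fourierStieltjes_mneg, Complex.mul_conj, Complex.normSq_eq_norm_sq]

lemma IsTightFrameSpectrum.hasSum_norm_fourierStieltjes_sub_sq {μ : Measure (Euc d)}
    [IsProbabilityMeasure μ] {Λ : Set (Euc d)} {A : ℝ} (hΛ : IsTightFrameSpectrum μ Λ A)
    (t : Euc d) : HasSum (fun l : Λ => ‖fourierStieltjes μ (l - t)‖ ^ 2) A := by
  have hframe := hΛ.2.2 (fexp (-t)) (MemLp.of_bound
    (continuous_fexp (-t)).aestronglyMeasurable 1
    (.of_forall fun x => (norm_fexp (-t) x).le))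
  simp only [← fexp_add_left, neg_add_eq_sub, norm_fexp, one_pow, integral_const,
    probReal_univ, smul_eq_mul, mul_one] at hframe
  exact (not_imp_comm.1 tsum_eq_zero_of_not_summable (hframe ▸ hΛ.2.1.ne')).hasSum_iff.2 hframe

lemma SchwartzMap.eq_integral_fexp_mul_fourier (f : 𝓢(Euc d, ℂ)) (z : Euc d) :
    f z = ∫ t, fexp (-t) z * 𝓕 f t := by
  rw [← fourierInv_eq_integral_fexp, SchwartzMap.fourier_coe,
    f.continuous.fourierInv_fourier_eq f.integrable (𝓕 f).integrable]

lemma SchwartzMap.integral_fourier_eq (f : 𝓢(Euc d, ℂ)) : ∫ t, 𝓕 f t = f 0 := by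
  simp only [f.eq_integral_fexp_mul_fourier 0, fexp_zero_right, one_mul]

lemma SchwartzMap.integral_mul_fexp_mconv (μ ν : Measure (Euc d)) [IsFiniteMeasure μ]
    [IsFiniteMeasure ν] (f : 𝓢(Euc d, ℂ)) (l : Euc d) :
    ∫ z, f z * fexp l z ∂(mconv μ ν) =
      ∫ t, 𝓕 f t * (fourierStieltjes μ (l - t) * fourierStieltjes ν (l - t)) := by
  have hsynth : ∀ z, f z * fexp l z = ∫ t, 𝓕 f t * fexp (l - t) z := fun z => by
    rw [f.eq_integral_fexp_mul_fourier, ← integral_mul_const]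
    congr 1 with t
    rw [sub_eq_neg_add, fexp_add_left]
    ring
  have hint : Integrable (Function.uncurry fun (p : Euc d × Euc d) t =>
      𝓕 f t * (fexp (l - t) p.1 * fexp (l - t) p.2)) ((μ.prod ν).prod volume) := by
    refine ((𝓕 f).integrable.norm.comp_snd (μ.prod ν)).mono ?_ (.of_forall fun q => ?_)
    · have : Continuous fun q : (Euc d × Euc d) × Euc d =>
          𝓕 f q.2 * (fexp (l - q.2) q.1.1 * fexp (l - q.2) q.1.2) := by
        unfold fexp; fun_prop
      exact this.aestronglyMeasurable
    · simp [Function.uncurry, norm_fexp]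
  calc ∫ z, f z * fexp l z ∂(mconv μ ν)
      = ∫ p : Euc d × Euc d, (∫ t, 𝓕 f t * (fexp (l - t) p.1 * fexp (l - t) p.2))
          ∂(μ.prod ν) := by
        rw [mconv, integral_map (f := fun z => f z * fexp l z) measurable_add.aemeasurable
          (f.continuous.mul (continuous_fexp l)).aestronglyMeasurable]
        simp only [hsynth, ← fexp_add_right]
    _ = ∫ t, 𝓕 f t * (fourierStieltjes μ (l - t) * fourierStieltjes ν (l - t)) := by
        rw [integral_integral_swap hint]
        simp only [integral_const_mul, integral_prod_mul, fourierStieltjes]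

end Fourier

section Density

variable {X E : Type*} [TopologicalSpace X] [T2Space X] [MeasurableSpace X]
  [OpensMeasurableSpace X] [NormedAddCommGroup E] [NormedSpace ℝ E]
  {ν ρ : Measure X} [IsFiniteMeasureOnCompacts ρ] {K : Set X} {g : X → ℝ}

lemma restrict_eq_withDensity_of_density (hK : IsCompact K) (hg : ContinuousOn g K)
    (hg0 : ∀ x ∈ K, 0 ≤ g x)
    (hdens : ∀ E, MeasurableSet E → E ⊆ K → ν E = ENNReal.ofReal (∫ x in E, g x ∂ρ)) :
    ν.restrict K = (ρ.restrict K).withDensity fun x => ENNReal.ofReal (g x) := by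
  ext s hs
  have hsK : MeasurableSet (s ∩ K) := hs.inter hK.measurableSet
  rw [Measure.restrict_apply hs, hdens _ hsK inter_subset_right, withDensity_apply _ hs,
    Measure.restrict_restrict hs, ofReal_integral_eq_lintegral_ofReal
      ((hg.integrableOn_compact hK).mono_set inter_subset_right)
      ((ae_restrict_iff' hsK).2 (.of_forall fun x hx => hg0 x hx.2))]

lemma integral_eq_integral_smul_of_density (hK : IsCompact K) (hg : ContinuousOn g K)
    (hg0 : ∀ x ∈ K, 0 ≤ g x)
    (hdens : ∀ E, MeasurableSet E → E ⊆ K → ν E = ENNReal.ofReal (∫ x in E, g x ∂ρ))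
    {h : X → E} (hh : ∀ x ∉ K, h x = 0) :
    ∫ x, h x ∂ν = ∫ x, g x • h x ∂ρ := calc
  ∫ x, h x ∂ν = ∫ x in K, h x ∂ν := (setIntegral_eq_integral_of_forall_compl_eq_zero hh).symm
  _ = ∫ x in K, (ENNReal.ofReal (g x)).toReal • h x ∂ρ := by
    rw [restrict_eq_withDensity_of_density hK hg hg0 hdens,
      integral_withDensity_eq_integral_toReal_smul₀
        (hg.aemeasurable hK.measurableSet).ennreal_ofReal (.of_forall fun _ => ofReal_lt_top)]
  _ = ∫ x in K, g x • h x ∂ρ :=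
    setIntegral_congr_fun hK.measurableSet fun x hx => by rw [toReal_ofReal (hg0 x hx)]
  _ = ∫ x, g x • h x ∂ρ :=
    setIntegral_eq_integral_of_forall_compl_eq_zero fun x hx => by rw [hh x hx, smul_zero]

end Density

lemma contDiff_div_of_tsupport_subset {E : Type*} [NormedAddCommGroup E] [NormedSpace ℝ E]
    {n : WithTop ℕ∞} {f : E → ℂ} {g : E → ℝ} {U : Set E} (hU : IsOpen U) (hf : ContDiff ℝ n f)
    (hg : ContDiffOn ℝ n g U) (hg0 : ∀ x ∈ U, g x ≠ 0) (hfU : tsupport f ⊆ U) :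
    ContDiff ℝ n fun x => f x / g x := by
  refine contDiff_iff_contDiffAt.2 fun x => ?_
  by_cases hx : x ∈ U
  · simp only [div_eq_mul_inv]
    exact hf.contDiffAt.mul ((Complex.ofRealCLM.contDiff.contDiffAt.comp x
      (hg.contDiffAt (hU.mem_nhds hx))).inv (by simpa using hg0 x hx))
  · have hf0 : f =ᶠ[nhds x] 0 := notMem_tsupport_iff_eventuallyEq.1 fun h => hx (hfU h)
    exact (contDiffAt_const (c := (0 : ℂ))).congr_of_eventuallyEq
      (hf0.mono fun y hy => by simp [hy])

lemma hasSum_integral_mul_of_hasSum {X ι : Type*} [MeasurableSpace X] [Countable ι]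
    {ρ : Measure X} {F : X → ℂ} (hF : Integrable F ρ) {c : ι → X → ℝ}
    (hc : ∀ i, AEStronglyMeasurable (c i) ρ) (hc0 : ∀ i x, 0 ≤ c i x) {A : ℝ}
    (hcA : ∀ x, HasSum (fun i => c i x) A) :
    HasSum (fun i => ∫ x, F x * c i x ∂ρ) (∫ x, F x * A ∂ρ) :=
  hasSum_integral_of_dominated_convergence (fun i x => ‖F x‖ * c i x)
    (fun i => hF.aestronglyMeasurable.mul
      (Complex.continuous_ofReal.comp_aestronglyMeasurable (hc i)))
    (fun i => .of_forall fun x => by simp [abs_of_nonneg (hc0 i x)])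
    (.of_forall fun x => ((hcA x).mul_left _).summable)
    (by simpa only [tsum_mul_left, (hcA _).tsum_eq] using hF.norm.mul_const A)
    (.of_forall fun x => (Complex.hasSum_ofReal.2 (hcA x)).mul_left (F x))

theorem support_of_dual_tiling_distribution_general
    {d : ℕ} (μ : Measure (Euc d)) [IsProbabilityMeasure μ]
    (Λ : Set (Euc d)) (A : ℝ) (hΛ : IsTightFrameSpectrum μ Λ A)
    (U : Set (Euc d)) (hU : IsOpen U) (g : Euc d → ℝ)
    (hg : ContDiffOn ℝ (⊤ : ℕ∞) g U) (hgpos : ∀ x ∈ U, 0 < g x)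
    (hdens : ∀ E : Set (Euc d), MeasurableSet E → E ⊆ U →
      mconv μ (mneg μ) E = ENNReal.ofReal (∫ x in E, g x)) :
    ∀ φ : SchwartzMap (Euc d) ℂ,
      IsCompact (tsupport (φ : Euc d → ℂ)) → tsupport (φ : Euc d → ℂ) ⊆ U →
      (0 : Euc d) ∉ tsupport (φ : Euc d → ℂ) →
      ∑' l : Λ, ftFun (fun x => φ x) (l : Euc d) = 0 := by
  intro φ hKc hKU h0K
  have : Countable Λ := hΛ.1.to_subtype
  have : IsProbabilityMeasure (mneg μ) :=
    Measure.isProbabilityMeasure_map measurable_neg.aemeasurable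
  have hψ0 (x : Euc d) (hx : x ∉ tsupport φ) : φ x / g x = 0 := by
    rw [image_eq_zero_of_notMem_tsupport hx, zero_div]
  let ψ : 𝓢(Euc d, ℂ) := (HasCompactSupport.intro hKc hψ0).toSchwartzMap
    (contDiff_div_of_tsupport_subset hU (φ.smooth ⊤) hg (fun x hx => (hgpos x hx).ne') hKU)
  have hφ (x : Euc d) : φ x = g x • ψ x := by
    by_cases hx : x ∈ U
    · have : (g x : ℂ) ≠ 0 := by exact_mod_cast (hgpos x hx).ne'
      simp [ψ, Complex.real_smul, mul_div_cancel₀ _ this]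
    · simp [ψ, image_eq_zero_of_notMem_tsupport fun h => hx (hKU h)]
  have hφψ (l : Euc d) :
      ftFun (fun x => φ x) l = ∫ z, ψ z * fexp l z ∂(mconv μ (mneg μ)) := by
    rw [integral_eq_integral_smul_of_density hKc (hg.continuousOn.mono hKU)
      (fun x hx => (hgpos x (hKU hx)).le) (fun E hE hEK => hdens E hE (hEK.trans hKU))
      (fun x hx => by simp [ψ, hψ0 x hx])]
    simp only [ftFun, hφ, smul_mul_assoc]
  calc ∑' l : Λ, ftFun (fun x => φ x) l
      = ∑' l : Λ, ∫ t, 𝓕 ψ t * ((‖fourierStieltjes μ (l - t)‖ ^ 2 : ℝ) : ℂ) := by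
        simp only [hφψ, ψ.integral_mul_fexp_mconv μ (mneg μ),
          fourierStieltjes_mul_fourierStieltjes_mneg]
    _ = ∫ t, 𝓕 ψ t * A :=
        (hasSum_integral_mul_of_hasSum (𝓕 ψ).integrable
          (fun l => (((continuous_fourierStieltjes μ).comp
            (continuous_const.sub continuous_id)).norm.pow 2).aestronglyMeasurable)
          (fun _ _ => sq_nonneg _) hΛ.hasSum_norm_fourierStieltjes_sub_sq).tsum_eq
    _ = 0 := by
        rw [integral_mul_const, ψ.integral_fourier_eq]
        simp [ψ, hψ0 0 h0K]

/-- If `μ` is a compactly supported probability measure with tight-frame spectrum `Λ`,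
and `μ*μ̃` has a smooth strictly positive density `g` on an open set `U`, then for every
Schwartz function `φ` with compact support contained in `U` and avoiding `0`,
`∑_{λ∈Λ} φ̂(λ) = 0`. -/
theorem support_of_dual_tiling_distribution
    {d : ℕ} (μ : Measure (Euc d)) [IsProbabilityMeasure μ]
    (hcpt : ∃ K : Set (Euc d), IsCompact K ∧ μ Kᶜ = 0)
    (Λ : Set (Euc d)) (A : ℝ) (hΛ : IsTightFrameSpectrum μ Λ A)
    (U : Set (Euc d)) (hU : IsOpen U) (g : Euc d → ℝ)
    (hg : ContDiffOn ℝ (⊤ : ℕ∞) g U) (hgpos : ∀ x ∈ U, 0 < g x)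
    (hdens : ∀ E : Set (Euc d), MeasurableSet E → E ⊆ U →
      mconv μ (mneg μ) E = ENNReal.ofReal (∫ x in E, g x)) :
    ∀ φ : SchwartzMap (Euc d) ℂ,
      IsCompact (tsupport (φ : Euc d → ℂ)) → tsupport (φ : Euc d → ℂ) ⊆ U →
      (0 : Euc d) ∉ tsupport (φ : Euc d → ℂ) →
      ∑' l : Λ, ftFun (fun x => φ x) (l : Euc d) = 0 :=
  support_of_dual_tiling_distribution_general μ Λ A hΛ U hU g hg hgpos hdens
end
end

section
/- Let x₀, y₀ ∈ ℝ² and let v, w ∈ ℝ² be linearly independent. Let μ = μ_{x₀,v} and ν = μ_{y₀,w} be the corresponding segment measures. Then μ*ν̃ equals |det(v, w)|⁻¹ times Lebesgue measure restricted to the parallelogram (x₀ − y₀) + Q_{v,−w}; that is, for every Borel set E ⊆ ℝ², (μ*ν̃)(E) = |v₁w₂ − v₂w₁|⁻¹ · vol₂(E ∩ ((x₀ − y₀) + Q_{v,−w})). -/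
open MeasureTheory Metric Set ENNReal

noncomputable section

/-- The parallelogram `Q_{v,w} = {t•v + s•w : t,s ∈ [0,1]}`. -/
def Qpar (v w : Euc 2) : Set (Euc 2) :=
  (fun p : ℝ × ℝ => p.1 • v + p.2 • w) '' (Set.Icc (0:ℝ) 1 ×ˢ Set.Icc (0:ℝ) 1)

/-! The convolution `μ_{x₀,v} * μ̃_{y₀,w}` is the image of Lebesgue measure on the unit square
under the affine map `(s, t) ↦ (x₀ - y₀) + s • v + t • (-w)`, which is a bijection onto the
translated parallelogram because `v, -w` is a basis. An invertible affine map pushes Lebesgue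
measure forward to `|det|⁻¹` times Lebesgue measure, and the linear part has determinant
`-det(v, w)`. -/

theorem mconv_map_map {d : ℕ} {α β : Type*} [MeasurableSpace α] [MeasurableSpace β]
    {μ : Measure α} {ν : Measure β} [SFinite μ] [SFinite ν] {f : α → Euc d} {g : β → Euc d}
    (hf : Measurable f) (hg : Measurable g) :
    mconv (μ.map f) (ν.map g) = (μ.prod ν).map fun p => f p.1 + g p.2 := by
  rw [mconv, Measure.map_prod_map μ ν hf hg, Measure.map_map (by fun_prop) (hf.prodMap hg)]
  rfl

theorem mneg_map {d : ℕ} {α : Type*} [MeasurableSpace α] {μ : Measure α} {f : α → Euc d}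
    (hf : Measurable f) : mneg (μ.map f) = μ.map fun x => -f x :=
  Measure.map_map measurable_neg hf

theorem mconv_segMeasure_mneg_segMeasure_eq_map (x0 y0 v w : Euc 2) :
    mconv (segMeasure x0 v) (mneg (segMeasure y0 w)) =
      (volume.restrict (Icc (0 : ℝ) 1 ×ˢ Icc (0 : ℝ) 1)).map
        fun p : ℝ × ℝ => x0 - y0 + (p.1 • v + p.2 • -w) := by
  rw [segMeasure, segMeasure, mneg_map (by fun_prop), mconv_map_map (by fun_prop) (by fun_prop),
    Measure.prod_restrict, ← Measure.volume_eq_prod]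
  congr 1
  funext p
  module

theorem Module.Basis.map_equivFun_symm_volume {ι : Type*} [Fintype ι] [DecidableEq ι]
    (b : Module.Basis ι ℝ (EuclideanSpace ℝ ι)) :
    volume.map b.equivFun.symm =
      (ENNReal.ofReal |(EuclideanSpace.basisFun ι ℝ).toBasis.det b|)⁻¹ • volume := by
  set e := (EuclideanSpace.basisFun ι ℝ).toBasis
  set A : EuclideanSpace ℝ ι →ₗ[ℝ] EuclideanSpace ℝ ι := (e.equiv b (Equiv.refl ι)).toLinearMap
  have hA : ⇑b.equivFun.symm = A ∘ WithLp.toLp 2 := by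
    funext x
    rw [Function.comp_apply, ← e.sum_repr (WithLp.toLp 2 x)]
    simp only [A, LinearEquiv.coe_coe, map_sum, map_smul, Module.Basis.equiv_apply,
      Equiv.refl_apply]
    simp [e]
  have hdet : LinearMap.det A = e.det b := Module.Basis.det_basis b e
  have hne : e.det b ≠ 0 := (e.isUnit_det b).ne_zero
  rw [hA, ← Measure.map_map A.continuous_of_finiteDimensional.measurable
      (PiLp.volume_preserving_toLp ι).measurable, (PiLp.volume_preserving_toLp ι).map_eq,
    Measure.map_linearMap_addHaar_eq_smul_addHaar volume (hdet ▸ hne), hdet, abs_inv,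
    ENNReal.ofReal_inv_of_pos (abs_pos.2 hne)]

theorem det_basisFun_fin_two (u : Fin 2 → Euc 2) :
    (EuclideanSpace.basisFun (Fin 2) ℝ).toBasis.det u = u 0 0 * u 1 1 - u 1 0 * u 0 1 := by
  simp [Module.Basis.det_apply, Matrix.det_fin_two, Module.Basis.toMatrix_apply]

def affineCoords (c : Euc 2) (b : Module.Basis (Fin 2) ℝ (Euc 2)) : ℝ × ℝ ≃ᵐ Euc 2 :=
  MeasurableEquiv.finTwoArrow.symm.trans <|
    b.equivFun.symm.toContinuousLinearEquiv.toHomeomorph.toMeasurableEquiv.trans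
      (Homeomorph.addLeft c).toMeasurableEquiv

@[simp]
theorem affineCoords_apply (c : Euc 2) (b : Module.Basis (Fin 2) ℝ (Euc 2)) (p : ℝ × ℝ) :
    affineCoords c b p = c + (p.1 • b 0 + p.2 • b 1) := by
  simp [affineCoords, Fin.sum_univ_two]

theorem map_affineCoords_volume (c : Euc 2) (b : Module.Basis (Fin 2) ℝ (Euc 2)) :
    volume.map (affineCoords c b) =
      (ENNReal.ofReal |(EuclideanSpace.basisFun (Fin 2) ℝ).toBasis.det b|)⁻¹ • volume := by
  have hcomp : ⇑(affineCoords c b) =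
      (c + ·) ∘ b.equivFun.symm ∘ MeasurableEquiv.finTwoArrow.symm := rfl
  have hb : Measurable b.equivFun.symm :=
    b.equivFun.symm.toContinuousLinearEquiv.continuous.measurable
  rw [hcomp, ← Measure.map_map (measurable_const_add c)
      (hb.comp MeasurableEquiv.finTwoArrow.symm.measurable),
    ← Measure.map_map hb MeasurableEquiv.finTwoArrow.symm.measurable,
    ((volume_preserving_finTwoArrow ℝ).symm _).map_eq, b.map_equivFun_symm_volume,
    Measure.map_smul, map_add_left_eq_self]

theorem mconv_segMeasure_mneg_segMeasure {x0 y0 v w : Euc 2}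
    (hvw : LinearIndependent ℝ ![v, w]) :
    mconv (segMeasure x0 v) (mneg (segMeasure y0 w)) =
      (ENNReal.ofReal |v 0 * w 1 - v 1 * w 0|)⁻¹ •
        volume.restrict ((fun z => x0 - y0 + z) '' Qpar v (-w)) := by
  set b := basisOfLinearIndependentOfCardEqFinrank
    (LinearIndependent.pair_neg_right_iff.2 hvw) (by simp)
  set φ := affineCoords (x0 - y0) b
  set S := Icc (0 : ℝ) 1 ×ˢ Icc (0 : ℝ) 1
  have hφ : ⇑φ = fun p => x0 - y0 + (p.1 • v + p.2 • -w) := by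
    funext p
    simp [φ, b]
  have hdet : |(EuclideanSpace.basisFun (Fin 2) ℝ).toBasis.det b| = |v 0 * w 1 - v 1 * w 0| := by
    rw [← abs_neg, coe_basisOfLinearIndependentOfCardEqFinrank, det_basisFun_fin_two]
    congr 1
    simp only [Matrix.cons_val_zero, Matrix.cons_val_one, PiLp.neg_apply]
    ring
  calc mconv (segMeasure x0 v) (mneg (segMeasure y0 w))
      = (volume.restrict (φ ⁻¹' (φ '' S))).map φ := by
        rw [mconv_segMeasure_mneg_segMeasure_eq_map, φ.preimage_image, hφ]
    _ = (volume.map φ).restrict (φ '' S) := (φ.restrict_map _ _).symm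
    _ = _ := by
        rw [map_affineCoords_volume, hdet, Measure.restrict_smul, Qpar, image_image, hφ]

/-- For linearly independent `v, w`, the convolution `μ_{x₀,v} * (μ_{y₀,w})~` is
`|det(v,w)|⁻¹` times Lebesgue measure restricted to `(x₀-y₀) + Q_{v,-w}`. -/
theorem segMeasure_conv_not_parallel
    (x0 y0 v w : Euc 2) (hvw : LinearIndependent ℝ ![v, w]) :
    ∀ E : Set (Euc 2), MeasurableSet E →
      mconv (segMeasure x0 v) (mneg (segMeasure y0 w)) E =
        (ENNReal.ofReal |v 0 * w 1 - v 1 * w 0|)⁻¹ *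
          volume (E ∩ ((fun z => (x0 - y0) + z) '' Qpar v (-w))) := by
  intro E hE
  rw [mconv_segMeasure_mneg_segMeasure hvw, Measure.smul_apply, Measure.restrict_apply hE,
    smul_eq_mul]
end
end

section
/- Let N ≥ 3 and let v₁, …, v_N be nonzero vectors in ℝ² such that no closed half-plane contains all of them, i.e. for every nonzero u ∈ ℝ² there exists i with ⟨u, vᵢ⟩ < 0. Then the union ⋃_{1 ≤ i ≠ j ≤ N} Q_{vᵢ, vⱼ} contains an open neighborhood of the origin: there exists ε > 0 with B(0, ε) ⊆ ⋃_{i ≠ j} Q_{vᵢ, vⱼ}. -/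
open MeasureTheory Metric Set ENNReal

noncomputable section

/-! Work in an oriented Euclidean plane with area form `ω`. Given `x ≠ 0`, let `v i` be, among
the vectors with `ω x (v i) > 0`, the one making the smallest angle with `x` (largest
`⟪x, v i⟫ / ω x (v i)`). The half-plane hypothesis applied to the rotated vector `J (v i)` yields
`v j` with `ω (v i) (v j) < 0`, and minimality of the angle puts `x` in the cone spanned by
`v i` and `v j`; Cramer's rule `ω a b • x = ω x b • a + ω a x • b` gives the coefficients.
Since `ω (v i) (v j) ≠ 0`, these coefficients are `O(‖x‖)` with a constant depending only on
the pair, and there are finitely many pairs, so they lie in `[0, 1]` once `x` is small. -/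

open Module Filter Topology

section OrientedPlane

variable {E : Type*} [NormedAddCommGroup E] [InnerProductSpace ℝ E] [Fact (finrank ℝ E = 2)]

namespace Orientation

variable (o : Orientation ℝ E (Fin 2))

local notation "ω" => o.areaForm
local notation "J" => o.rightAngleRotation

theorem areaForm_smul_eq_smul_add_smul (a b x : E) : ω a b • x = ω x b • a + ω a x • b := by
  rcases eq_or_ne a 0 with rfl | ha
  · simp
  refine sub_eq_zero.1 ((o.eq_zero_or_eq_zero_of_kahler_eq_zero ?_).resolve_left ha)
  have key := o.inner_mul_areaForm_sub a x b
  simp only [map_sub, map_add, map_smul, kahler_apply_apply]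
  apply Complex.ext <;> simp [-Complex.ofReal_pow] <;> linarith

theorem mul_areaForm_of_eq_smul_add_smul {v w x : E} {t u : ℝ} (hx : x = t • v + u • w) :
    t * ω v w = ω x w ∧ u * ω v w = ω v x := by
  subst hx
  simp [areaForm_apply_self]

theorem eventually_abs_le_one_of_eq_smul_add_smul {v w : E} (h : ω v w ≠ 0) :
    ∀ᶠ x in 𝓝 (0 : E), ∀ t u : ℝ, x = t • v + u • w → |t| ≤ 1 ∧ |u| ≤ 1 := by
  have hlim : Tendsto (fun x : E => ‖x‖ * max ‖v‖ ‖w‖) (𝓝 0) (𝓝 0) :=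
    (continuous_norm.mul continuous_const).tendsto' 0 0 (by simp)
  filter_upwards [hlim.eventually_le_const (abs_pos.2 h)] with x hx t u hxtu
  obtain ⟨ht, hu⟩ := o.mul_areaForm_of_eq_smul_add_smul hxtu
  have hvw := abs_pos.2 h
  constructor
  · refine (mul_le_iff_le_one_left hvw).1 ?_
    calc |t| * |ω v w| = |ω x w| := by rw [← abs_mul, ht]
      _ ≤ ‖x‖ * ‖w‖ := o.abs_areaForm_le x w
      _ ≤ ‖x‖ * max ‖v‖ ‖w‖ := by gcongr; exact le_max_right _ _
      _ ≤ |ω v w| := hx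
  · refine (mul_le_iff_le_one_left hvw).1 ?_
    calc |u| * |ω v w| = |ω v x| := by rw [← abs_mul, hu]
      _ ≤ ‖v‖ * ‖x‖ := o.abs_areaForm_le v x
      _ ≤ ‖x‖ * max ‖v‖ ‖w‖ := by rw [mul_comm]; gcongr; exact le_max_left _ _
      _ ≤ |ω v w| := hx

theorem exists_areaForm_neg_and_mem_cone {ι : Type*} [Finite ι] {v : ι → E}
    (hv : ∀ y : E, y ≠ 0 → ∃ i, inner ℝ y (v i) < 0) {x : E} (hx : x ≠ 0) :
    ∃ i j, ω (v i) (v j) < 0 ∧ ∃ t u : ℝ, 0 ≤ t ∧ 0 ≤ u ∧ x = t • v i + u • v j := by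
  set P : Set ι := {i | 0 < ω x (v i)}
  have hP : P.Nonempty := by
    obtain ⟨i, hi⟩ := hv (-J x) (by simpa using hx)
    exact ⟨i, by simpa [P, inner_neg_left, inner_rightAngleRotation_left] using hi⟩
  obtain ⟨i, hiP, hi_max⟩ :=
    P.exists_max_image (fun k => inner ℝ x (v k) / ω x (v k)) P.toFinite hP
  have hi : 0 < ω x (v i) := hiP
  obtain ⟨j, hj⟩ := hv (J (v i)) (by
    intro h0
    rw [LinearIsometryEquiv.map_eq_zero_iff] at h0
    simp [h0] at hi)
  rw [inner_rightAngleRotation_left] at hj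
  have hxj : ω x (v j) ≤ 0 := by
    by_contra! hjP
    have hmax := hi_max j hjP
    rw [div_le_div_iff₀ hjP hi] at hmax
    have key := o.inner_mul_areaForm_sub x (v i) (v j)
    linarith [mul_neg_of_pos_of_neg (pow_pos (norm_pos_iff.2 hx) 2) hj]
  refine ⟨i, j, hj, ω x (v j) / ω (v i) (v j), ω (v i) x / ω (v i) (v j),
    div_nonneg_of_nonpos hxj hj.le, div_nonneg_of_nonpos ?_ hj.le, ?_⟩
  · rw [areaForm_swap]; linarith
  · rw [← smul_right_inj hj.ne, o.areaForm_smul_eq_smul_add_smul (v i) (v j) x, smul_add,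
      smul_smul, smul_smul, mul_div_cancel₀ _ hj.ne, mul_div_cancel₀ _ hj.ne]

theorem exists_areaForm_ne_zero_and_mem_cone {ι : Type*} [Finite ι] {v : ι → E}
    (hv : ∀ y : E, y ≠ 0 → ∃ i, inner ℝ y (v i) < 0) (x : E) :
    ∃ i j, ω (v i) (v j) ≠ 0 ∧ ∃ t u : ℝ, 0 ≤ t ∧ 0 ≤ u ∧ x = t • v i + u • v j := by
  rcases eq_or_ne x 0 with rfl | hx
  · have : Nontrivial E := Module.nontrivial_of_finrank_eq_succ (Fact.out : finrank ℝ E = 2)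
    obtain ⟨y, hy⟩ := exists_ne (0 : E)
    obtain ⟨i, j, hij, -⟩ := o.exists_areaForm_neg_and_mem_cone hv hy
    exact ⟨i, j, hij.ne, 0, 0, le_rfl, le_rfl, by simp⟩
  · obtain ⟨i, j, hij, hcone⟩ := o.exists_areaForm_neg_and_mem_cone hv hx
    exact ⟨i, j, hij.ne, hcone⟩

end Orientation

theorem eventually_exists_mem_parallelogram {ι : Type*} [Finite ι] {v : ι → E}
    (hv : ∀ y : E, y ≠ 0 → ∃ i, inner ℝ y (v i) < 0) :
    ∀ᶠ x in 𝓝 (0 : E), ∃ i j, i ≠ j ∧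
      ∃ t ∈ Icc (0 : ℝ) 1, ∃ u ∈ Icc (0 : ℝ) 1, x = t • v i + u • v j := by
  have : FiniteDimensional ℝ E := .of_fact_finrank_eq_two
  let o : Orientation ℝ E (Fin 2) := (Module.finBasisOfFinrankEq ℝ E Fact.out).orientation
  have hsmall : ∀ᶠ x in 𝓝 (0 : E), ∀ i j, o.areaForm (v i) (v j) ≠ 0 →
      ∀ t u : ℝ, x = t • v i + u • v j → |t| ≤ 1 ∧ |u| ≤ 1 :=
    eventually_all.2 fun i => eventually_all.2 fun j =>
      eventually_imp_distrib_left.2 o.eventually_abs_le_one_of_eq_smul_add_smul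
  filter_upwards [hsmall] with x hx
  obtain ⟨i, j, hij, t, u, ht, hu, rfl⟩ := o.exists_areaForm_ne_zero_and_mem_cone hv x
  obtain ⟨ht1, hu1⟩ := hx i j hij t u rfl
  refine ⟨i, j, ?_, t, ⟨ht, (le_abs_self t).trans ht1⟩, u, ⟨hu, (le_abs_self u).trans hu1⟩, rfl⟩
  rintro rfl
  exact hij (o.areaForm_apply_self _)

end OrientedPlane

theorem parallelograms_cover_origin_general
    (N : ℕ) (v : Fin N → Euc 2)
    (hhalf : ∀ u : Euc 2, u ≠ 0 → ∃ i, (inner ℝ u (v i) : ℝ) < 0) :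
    ∃ ε : ℝ, 0 < ε ∧
      Metric.ball (0 : Euc 2) ε ⊆ ⋃ (i) (j) (_ : i ≠ j), Qpar (v i) (v j) := by
  have : Fact (finrank ℝ (Euc 2) = 2) := ⟨finrank_euclideanSpace_fin⟩
  obtain ⟨ε, hε, hball⟩ :=
    Metric.eventually_nhds_iff_ball.1 (eventually_exists_mem_parallelogram hhalf)
  refine ⟨ε, hε, fun x hx => ?_⟩
  obtain ⟨i, j, hij, t, ht, u, hu, rfl⟩ := hball x hx
  exact mem_iUnion₂.2 ⟨i, j, mem_iUnion.2 ⟨hij, (t, u), ⟨ht, hu⟩, rfl⟩⟩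

/-- If `N ≥ 3` nonzero vectors in ℝ² are not all contained in any closed half-plane,
then the union of the parallelograms `Q_{vᵢ,vⱼ}`, `i ≠ j`, covers a neighborhood of
the origin. -/
theorem parallelograms_cover_origin
    (N : ℕ) (hN : 3 ≤ N) (v : Fin N → Euc 2) (hv : ∀ i, v i ≠ 0)
    (hhalf : ∀ u : Euc 2, u ≠ 0 → ∃ i, (inner ℝ u (v i) : ℝ) < 0) :
    ∃ ε : ℝ, 0 < ε ∧
      Metric.ball (0 : Euc 2) ε ⊆ ⋃ (i) (j) (_ : i ≠ j), Qpar (v i) (v j) :=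
  parallelograms_cover_origin_general N v hhalf
end
end

section
/- Let γ : ℝ → ℝ² be a smooth closed planar curve of length L > 0 with positive curvature, parametrized by arc length. Then there exists δ₀ > 0 such that for every interval I ⊆ ℝ of length less than δ₀, the map Γ(s,t) = γ(s) − γ(t) is injective on (I × I) \ {(s,s) : s ∈ I}; that is, if s, t, s′, t′ ∈ I with s ≠ t and s′ ≠ t′ satisfy γ(s) − γ(t) = γ(s′) − γ(t′), then s = s′ and t = t′. -/
open MeasureTheory Metric Set ENNReal

noncomputable section

/-!
Let `T = γ'` and fix `a`. Since `T'` is continuous and periodic it is bounded, say by `M`, so on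
an interval `[a, b]` with `b - a < 1 / M` we have `‖T u - T a‖ < 1` and hence `⟪T a, T u⟫ > 0`.
Let `ω` be the area form of an orientation of the plane. In the coordinates `x = ⟪T a, γ⟫`,
`y = ω (T a) γ` the arc over `[a, b]` is then a graph with slope `y' / x' = ω (T a) T / ⟪T a, T⟫`,
whose derivative is `ω T T' / ⟪T a, T⟫²`. The curvature `ω T T'` never vanishes, so after choosing
the orientation it is positive and the slope is strictly increasing. Two chords with the same
vector have equal increments of `x` and of `y`; after cutting off their common part they become
disjoint, and Cauchy's mean value theorem makes the slope of the later chord strictly larger.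
-/

open Module
open scoped InnerProductSpace

theorem Function.Periodic.deriv {𝕜 F : Type*} [NontriviallyNormedField 𝕜] [NormedAddCommGroup F]
    [NormedSpace 𝕜 F] {f : 𝕜 → F} {c : 𝕜} (hf : Function.Periodic f c) :
    Function.Periodic (deriv f) c := fun x => by
  rw [← deriv_comp_add_const, hf.funext]

theorem Continuous.forall_pos_or_forall_neg {X : Type*} [TopologicalSpace X] [PreconnectedSpace X]
    {f : X → ℝ} (hf : Continuous f) (h : ∀ x, f x ≠ 0) : (∀ x, 0 < f x) ∨ ∀ x, f x < 0 := by
  by_contra! ⟨⟨x, hx⟩, y, hy⟩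
  obtain ⟨z, hz⟩ := intermediate_value_univ x y hf ⟨hx, hy⟩
  exact h z hz

section ParametricChord

variable {f g f' g' : ℝ → ℝ} {I : Set ℝ}

theorem strictMonoOn_of_hasDerivAt_pos (hI : I.OrdConnected) (hf : ∀ x, HasDerivAt f (f' x) x)
    (hf' : ∀ x ∈ I, 0 < f' x) : StrictMonoOn f I :=
  strictMonoOn_of_deriv_pos hI.convex (fun x _ => (hf x).continuousAt.continuousWithinAt)
    (fun x hx => (hf x).deriv ▸ hf' x (interior_subset hx))

theorem chord_slope_lt_chord_slope (hI : I.OrdConnected)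
    (hf : ∀ x, HasDerivAt f (f' x) x) (hg : ∀ x, HasDerivAt g (g' x) x)
    (hf' : ∀ x ∈ I, 0 < f' x) (hmono : StrictMonoOn (fun x => g' x / f' x) I)
    {p q r w : ℝ} (hp : p ∈ I) (hw : w ∈ I) (hpq : p < q) (hqr : q ≤ r) (hrw : r < w) :
    (g q - g p) / (f q - f p) < (g w - g r) / (f w - f r) := by
  have hfmono := strictMonoOn_of_hasDerivAt_pos hI hf hf'
  have cauchy_mvt : ∀ {x y}, x ∈ I → y ∈ I → x < y →
      ∃ c ∈ I, x < c ∧ c < y ∧ (g y - g x) / (f y - f x) = g' c / f' c := by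
    intro x y hx hy hxy
    obtain ⟨c, hc, hc_eq⟩ := exists_ratio_hasDerivAt_eq_ratio_slope f f' hxy
      (fun u _ => (hf u).continuousAt.continuousWithinAt) (fun u _ => hf u)
      g g' (fun u _ => (hg u).continuousAt.continuousWithinAt) (fun u _ => hg u)
    have hc_mem : c ∈ I := hI.out hx hy (Ioo_subset_Icc_self hc)
    refine ⟨c, hc_mem, hc.1, hc.2, ?_⟩
    rw [div_eq_div_iff (sub_pos.2 (hfmono hx hy hxy)).ne' (hf' c hc_mem).ne']
    linarith
  have hq : q ∈ I := hI.out hp hw ⟨hpq.le, by linarith⟩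
  have hr : r ∈ I := hI.out hp hw ⟨by linarith, hrw.le⟩
  obtain ⟨c, hc, -, hcq, hc_eq⟩ := cauchy_mvt hp hq hpq
  obtain ⟨d, hd, hrd, -, hd_eq⟩ := cauchy_mvt hr hw hrw
  rw [hc_eq, hd_eq]
  exact hmono hc hd (by linarith)

theorem eq_and_eq_of_chord_eq (hI : I.OrdConnected)
    (hf : ∀ x, HasDerivAt f (f' x) x) (hg : ∀ x, HasDerivAt g (g' x) x)
    (hf' : ∀ x ∈ I, 0 < f' x) (hmono : StrictMonoOn (fun x => g' x / f' x) I)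
    {s t s' t' : ℝ} (hs : s ∈ I) (ht : t ∈ I) (hs' : s' ∈ I) (ht' : t' ∈ I) (hst : s ≠ t)
    (hfe : f s - f t = f s' - f t') (hge : g s - g t = g s' - g t') : s = s' ∧ t = t' := by
  have hfmono := strictMonoOn_of_hasDerivAt_pos hI hf hf'
  have no_shifted_chord : ∀ {p q r w}, p ∈ I → q ∈ I → r ∈ I → w ∈ I → p < q → r < w → p < r →
      f q - f p = f w - f r → g q - g p = g w - g r → False := by
    intro p q r w hp hq hr hw hpq hrw hpr hfe hge
    rcases le_or_gt q r with hqr | hrq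
    · have := chord_slope_lt_chord_slope hI hf hg hf' hmono hp hw hpq hqr hrw
      rw [hfe, hge] at this
      exact lt_irrefl _ this
    · -- removing the overlap `[r, q]` leaves two disjoint chords with the same increments
      have hqw : q < w := hfmono.lt_iff_lt hq hw |>.1 (by linarith [hfmono hp hr hpr])
      have := chord_slope_lt_chord_slope hI hf hg hf' hmono hp hw hpr hrq.le hqw
      rw [show f r - f p = f w - f q by linarith, show g r - g p = g w - g q by linarith] at this
      exact lt_irrefl _ this
  wlog hts : t < s generalizing s t s' t'
  · exact (this ht hs ht' hs' hst.symm (by linarith) (by linarith)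
      ((not_lt.1 hts).lt_of_ne hst)).symm
  have hts' : t' < s' := hfmono.lt_iff_lt ht' hs' |>.1 (by linarith [hfmono ht hs hts])
  rcases lt_trichotomy t t' with htt' | rfl | ht't
  · exact (no_shifted_chord ht hs ht' hs' hts hts' htt' hfe hge).elim
  · exact ⟨hfmono.injOn hs hs' (by linarith), rfl⟩
  · exact (no_shifted_chord ht' hs' ht hs hts' hts ht't hfe.symm hge.symm).elim

end ParametricChord

theorem inner_deriv_eq_zero_of_norm_eq_const {E : Type*} [NormedAddCommGroup E]
    [InnerProductSpace ℝ E] {F : ℝ → E} {c x : ℝ} (hF : DifferentiableAt ℝ F x)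
    (hnorm : ∀ y, ‖F y‖ = c) : ⟪F x, deriv F x⟫_ℝ = 0 := by
  have h := hF.hasDerivAt.norm_sq
  simp only [hnorm] at h
  linarith [h.unique (hasDerivAt_const x (c ^ 2))]

theorem HasDerivAt.const_inner {E : Type*} [NormedAddCommGroup E] [InnerProductSpace ℝ E]
    {F : ℝ → E} {F' : E} {x : ℝ} (w : E) (hF : HasDerivAt F F' x) :
    HasDerivAt (fun u => ⟪w, F u⟫_ℝ) ⟪w, F'⟫_ℝ x :=
  (innerSL ℝ w).hasFDerivAt.comp_hasDerivAt x hF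

theorem inner_deriv_pos_of_norm_deriv_deriv_le {E : Type*} [NormedAddCommGroup E]
    [InnerProductSpace ℝ E] {γ : ℝ → E} {M a u : ℝ} (hT : Differentiable ℝ (deriv γ))
    (harc : ∀ u, ‖deriv γ u‖ = 1) (hM : ∀ u, ‖deriv (deriv γ) u‖ ≤ M) (hu : M * |u - a| < 1) :
    0 < ⟪deriv γ a, deriv γ u⟫_ℝ := by
  have hlip : ‖deriv γ u - deriv γ a‖ < 1 :=
    (convex_univ.norm_image_sub_le_of_norm_deriv_le (fun x _ => hT x) (fun x _ => hM x)
      (mem_univ a) (mem_univ u)).trans_lt hu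
  have hsq := norm_sub_sq_real (deriv γ u) (deriv γ a)
  rw [harc, harc, real_inner_comm] at hsq
  nlinarith [norm_nonneg (deriv γ u - deriv γ a)]

section PlaneCurve

variable {E : Type*} [NormedAddCommGroup E] [InnerProductSpace ℝ E] [Fact (finrank ℝ E = 2)]
  (o : Orientation ℝ E (Fin 2)) {γ : ℝ → E}

local notation "ω" => o.areaForm

attribute [local instance] FiniteDimensional.of_fact_finrank_eq_two

theorem Orientation.areaForm_ne_zero_of_inner_eq_zero {x y : E} (hx : x ≠ 0) (hy : y ≠ 0)
    (h : ⟪x, y⟫_ℝ = 0) : ω x y ≠ 0 := by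
  intro h'
  have := o.inner_sq_add_areaForm_sq x y
  rw [h, h'] at this
  have : ‖x‖ * ‖y‖ = 0 := by nlinarith [norm_nonneg x, norm_nonneg y]
  simp_all

theorem Orientation.hasDerivAt_areaForm {F : ℝ → E} {F' : E} {x : ℝ} (w : E)
    (hF : HasDerivAt F F' x) : HasDerivAt (fun u => ω w (F u)) (ω w F') x :=
  (o.areaForm' w).hasFDerivAt.comp_hasDerivAt x hF

theorem exists_orientation_areaForm_deriv_deriv_pos (hT : Differentiable ℝ (deriv γ))
    (hN : Continuous (deriv (deriv γ))) (harc : ∀ u, ‖deriv γ u‖ = 1)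
    (hcurv : ∀ u, deriv (deriv γ) u ≠ 0) :
    ∃ o' : Orientation ℝ E (Fin 2), ∀ u, 0 < o'.areaForm (deriv γ u) (deriv (deriv γ) u) := by
  let o : Orientation ℝ E (Fin 2) := (finBasisOfFinrankEq ℝ E Fact.out).orientation
  have hκ : Continuous fun u => o.areaForm (deriv γ u) (deriv (deriv γ) u) :=
    o.areaForm'.continuous₂.comp₂ hT.continuous hN
  have hκ0 : ∀ u, o.areaForm (deriv γ u) (deriv (deriv γ) u) ≠ 0 := fun u =>
    o.areaForm_ne_zero_of_inner_eq_zero (norm_ne_zero_iff.1 (by simp [harc u])) (hcurv u)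
      (inner_deriv_eq_zero_of_norm_eq_const (hT u) harc)
  rcases hκ.forall_pos_or_forall_neg hκ0 with hpos | hneg
  · exact ⟨o, hpos⟩
  · exact ⟨-o, fun u => by simpa [o.areaForm_neg_orientation] using hneg u⟩

theorem Orientation.strictMonoOn_areaForm_div_inner {I : Set ℝ} (hI : I.OrdConnected)
    (hT : Differentiable ℝ (deriv γ)) (hκ : ∀ u ∈ I, 0 < ω (deriv γ u) (deriv (deriv γ) u))
    {w : E} (hw : ∀ u ∈ I, 0 < ⟪w, deriv γ u⟫_ℝ) :
    StrictMonoOn (fun u => ω w (deriv γ u) / ⟪w, deriv γ u⟫_ℝ) I := by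
  refine strictMonoOn_of_deriv_pos hI.convex (fun u hu => ?_) (fun u hu => ?_)
  · exact ((o.hasDerivAt_areaForm w (hT u).hasDerivAt).continuousAt.div
      ((hT u).hasDerivAt.const_inner w).continuousAt (hw u hu).ne').continuousWithinAt
  · have hu := interior_subset hu
    rw [((o.hasDerivAt_areaForm w (hT u).hasDerivAt).fun_div
      ((hT u).hasDerivAt.const_inner w) (hw u hu).ne').deriv,
      mul_comm (ω w _), o.inner_mul_areaForm_sub]
    have hw0 : w ≠ 0 := by rintro rfl; simpa using hw u hu
    exact div_pos (mul_pos (by positivity) (hκ u hu)) (pow_pos (hw u hu) 2)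

theorem Orientation.eq_and_eq_of_chord_eq {I : Set ℝ} (hI : I.OrdConnected)
    (hγ : Differentiable ℝ γ) (hT : Differentiable ℝ (deriv γ))
    (hκ : ∀ u ∈ I, 0 < ω (deriv γ u) (deriv (deriv γ) u))
    {w : E} (hw : ∀ u ∈ I, 0 < ⟪w, deriv γ u⟫_ℝ)
    {s t s' t' : ℝ} (hs : s ∈ I) (ht : t ∈ I) (hs' : s' ∈ I) (ht' : t' ∈ I) (hst : s ≠ t)
    (heq : γ s - γ t = γ s' - γ t') : s = s' ∧ t = t' :=
  _root_.eq_and_eq_of_chord_eq (f := fun u => ⟪w, γ u⟫_ℝ) (g := fun u => ω w (γ u)) hI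
    (fun u => (hγ u).hasDerivAt.const_inner w)
    (fun u => o.hasDerivAt_areaForm w (hγ u).hasDerivAt) hw
    (o.strictMonoOn_areaForm_div_inner hI hT hκ hw) hs ht hs' ht' hst
    (by rw [← inner_sub_right, ← inner_sub_right, heq])
    (by rw [← map_sub, ← map_sub, heq])

end PlaneCurve

/-- For a smooth closed planar curve of positive curvature parametrized by arc length,
there is `δ₀ > 0` such that on every interval of length less than `δ₀` the map
`Γ(s,t) = γ(s) - γ(t)` is injective off the diagonal. -/
theorem chord_map_locally_injective
    (L : ℝ) (hL : 0 < L) (γ : ℝ → Euc 2)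
    (hsmooth : ContDiff ℝ (⊤ : ℕ∞) γ)
    (hper : Function.Periodic γ L)
    (harc : ∀ s, ‖deriv γ s‖ = 1)
    (hcurv : ∀ s, deriv (deriv γ) s ≠ 0) :
    ∃ δ₀ : ℝ, 0 < δ₀ ∧ ∀ a b : ℝ, b - a < δ₀ →
      ∀ s ∈ Set.Icc a b, ∀ t ∈ Set.Icc a b, ∀ s' ∈ Set.Icc a b, ∀ t' ∈ Set.Icc a b,
        s ≠ t → s' ≠ t' → γ s - γ t = γ s' - γ t' → s = s' ∧ t = t' := by
  have hγ2 : ContDiff ℝ 2 γ := hsmooth.of_le (WithTop.coe_le_coe.2 le_top)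
  have hT : Differentiable ℝ (deriv γ) :=
    (contDiff_succ_iff_deriv.1 hγ2).2.2.differentiable one_ne_zero
  have hN : Continuous (deriv (deriv γ)) :=
    (contDiff_succ_iff_deriv.1 hγ2).2.2.continuous_deriv le_rfl
  have : Fact (finrank ℝ (Euc 2) = 2) := ⟨finrank_euclideanSpace_fin⟩
  obtain ⟨o, hκ⟩ := exists_orientation_areaForm_deriv_deriv_pos hT hN harc hcurv
  obtain ⟨M, hM0, hM⟩ :=
    (hper.deriv.deriv.isBounded_of_continuous hL.ne' hN).exists_pos_norm_le
  refine ⟨1 / M, by positivity, fun a b hab s hs t ht s' hs' t' ht' hst _ heq => ?_⟩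
  have hw : ∀ u ∈ Icc a b, 0 < ⟪deriv γ a, deriv γ u⟫_ℝ := fun u hu =>
    inner_deriv_pos_of_norm_deriv_deriv_le hT harc (fun x => hM _ (mem_range_self x)) <| by
      rw [abs_of_nonneg (sub_nonneg.2 hu.1)]
      calc M * (u - a) ≤ M * (b - a) := by gcongr; exact hu.2
        _ < M * (1 / M) := by gcongr
        _ = 1 := by field_simp
  exact o.eq_and_eq_of_chord_eq ordConnected_Icc (hγ2.differentiable (by norm_num)) hT
    (fun u _ => hκ u) hw hs ht hs' ht' hst heq
end
end

section
/- Let μ and ν be compactly supported Borel probability measures on ℝ^d such that the intersection supp μ ∩ supp ν of their closed supports has μ-measure zero and ν-measure zero. If a countable set Λ ⊆ ℝ^d is a tight-frame spectrum for the measure (1/2)(μ + ν) with constant A > 0, then Λ is a tight-frame spectrum for μ with constant 2A. -/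
open MeasureTheory Metric Set ENNReal

noncomputable section

/-- The closed support of a measure: points all of whose balls have positive measure. -/
def msupp {d : ℕ} (μ : Measure (Euc d)) : Set (Euc d) :=
  {x | ∀ r : ℝ, 0 < r → 0 < μ (Metric.ball x r)}

/-!
The hypothesis makes `μ` and `ν` mutually singular: `μ` gives no mass to `supp ν`, which carries
`ν`. So `μ` is the restriction of `μ + ν` to a measurable set, and tight-frame spectra pass to
restrictions, since a function in `L²` of the restriction, extended by zero, lies in `L²(μ + ν)`
and has the same Fourier coefficients and norm. The factor `1/2` only rescales the frame constant.
-/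

namespace IsTightFrameSpectrum

variable {d : ℕ} {m : Measure (Euc d)} {Λ : Set (Euc d)} {A : ℝ}

theorem restrict (hΛ : IsTightFrameSpectrum m Λ A) {s : Set (Euc d)} (hs : MeasurableSet s) :
    IsTightFrameSpectrum (m.restrict s) Λ A := by
  obtain ⟨hcount, hA, hframe⟩ := hΛ
  refine ⟨hcount, hA, fun f hf => ?_⟩
  have hsq : (fun x => ‖s.indicator f x‖ ^ 2) = s.indicator fun x => ‖f x‖ ^ 2 :=
    (Set.indicator_comp_of_zero (g := fun z : ℂ => ‖z‖ ^ 2) (by simp)).symm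
  have hext := hframe (s.indicator f) ((memLp_indicator_iff_restrict hs).mpr hf)
  simpa only [← Set.indicator_mul_left, hsq, integral_indicator hs] using hext

theorem of_smul_measure {c : ℝ≥0∞} (hc₀ : c ≠ 0) (hc : c ≠ ∞)
    (hΛ : IsTightFrameSpectrum (c • m) Λ A) : IsTightFrameSpectrum m Λ (A / c.toReal) := by
  obtain ⟨hcount, hA, hframe⟩ := hΛ
  have hc' : 0 < c.toReal := ENNReal.toReal_pos hc₀ hc
  refine ⟨hcount, div_pos hA hc', fun f hf => ?_⟩
  have hscaled := hframe f (hf.smul_measure hc)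
  simp only [integral_smul_measure, norm_smul, mul_pow, Real.norm_of_nonneg hc'.le,
    tsum_mul_left, smul_eq_mul] at hscaled
  refine mul_left_cancel₀ (pow_ne_zero 2 hc'.ne') (hscaled.trans ?_)
  field_simp

end IsTightFrameSpectrum

theorem MeasureTheory.Measure.MutuallySingular.add_restrict_compl_nullSet {α : Type*}
    [MeasurableSpace α] {μ ν : Measure α} (h : μ ⟂ₘ ν) : (μ + ν).restrict h.nullSetᶜ = μ := by
  rw [Measure.restrict_add, h.restrict_compl_nullSet, add_zero]
  exact Measure.restrict_eq_self_of_ae_mem (compl_mem_ae_iff.mpr h.measure_nullSet)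

theorem measure_compl_msupp {d : ℕ} (μ : Measure (Euc d)) : μ (msupp μ)ᶜ = 0 := by
  refine measure_null_of_locally_null _ fun x hx => ?_
  simp only [msupp, Set.mem_compl_iff, Set.mem_ofPred_eq, not_forall, not_lt,
    nonpos_iff_eq_zero] at hx
  obtain ⟨r, hr, hball⟩ := hx
  exact ⟨ball x r, mem_nhdsWithin_of_mem_nhds (ball_mem_nhds x hr), hball⟩

theorem mutuallySingular_of_measure_msupp_inter_eq_zero {d : ℕ} {μ ν : Measure (Euc d)}
    (h : μ (msupp μ ∩ msupp ν) = 0) : μ ⟂ₘ ν := by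
  have hsupp : μ (msupp ν) = 0 := by
    refine measure_mono_null (fun x hx => ?_) (measure_union_null h (measure_compl_msupp μ))
    by_cases hxμ : x ∈ msupp μ
    exacts [Or.inl ⟨hxμ, hx⟩, Or.inr hxμ]
  refine ⟨toMeasurable μ (msupp ν), measurableSet_toMeasurable _ _,
    (measure_toMeasurable _).trans hsupp, ?_⟩
  exact measure_mono_null (compl_subset_compl.mpr (subset_toMeasurable _ _))
    (measure_compl_msupp ν)

theorem tight_frame_spectrum_restricts_general
    {d : ℕ} (μ ν : Measure (Euc d))
    (hμ0 : μ (msupp μ ∩ msupp ν) = 0)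
    (Λ : Set (Euc d)) (A : ℝ)
    (hΛ : IsTightFrameSpectrum ((2 : ℝ≥0∞)⁻¹ • (μ + ν)) Λ A) :
    IsTightFrameSpectrum μ Λ (2 * A) := by
  have hsing := mutuallySingular_of_measure_msupp_inter_eq_zero hμ0
  have hsum := hΛ.of_smul_measure (by simp) (by simp)
  rw [ENNReal.toReal_inv, ENNReal.toReal_ofNat, div_inv_eq_mul, mul_comm] at hsum
  simpa only [hsing.add_restrict_compl_nullSet]
    using hsum.restrict hsing.measurableSet_nullSet.compl

/-- If `supp μ ∩ supp ν` is null for both `μ` and `ν`, then any tight-frame spectrum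
for `(1/2)(μ+ν)` with constant `A` is a tight-frame spectrum for `μ` with constant `2A`. -/
theorem tight_frame_spectrum_restricts
    {d : ℕ} (μ ν : Measure (Euc d)) [IsProbabilityMeasure μ] [IsProbabilityMeasure ν]
    (hcμ : ∃ K : Set (Euc d), IsCompact K ∧ μ Kᶜ = 0)
    (hcν : ∃ K : Set (Euc d), IsCompact K ∧ ν Kᶜ = 0)
    (hμ0 : μ (msupp μ ∩ msupp ν) = 0) (hν0 : ν (msupp μ ∩ msupp ν) = 0)
    (Λ : Set (Euc d)) (A : ℝ)
    (hΛ : IsTightFrameSpectrum ((2 : ℝ≥0∞)⁻¹ • (μ + ν)) Λ A) :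
    IsTightFrameSpectrum μ Λ (2 * A) :=
  tight_frame_spectrum_restricts_general μ ν hμ0 Λ A hΛ
end
end
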